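/- Let H : S¹ × ℝ^{2n} → ℝ be smooth and A : S¹ → Sym(2n) a smooth path of symmetric 2n×2n real matrices such that sup_{t∈S¹} |∇H_t(z) − A_t z| = o(|z|) as |z| → ∞. Assume every solution of ẋ(t) = −J₀∇H_t(x(t)) exists on [0,1]. Then the time-1 maps of H and of its quadratic part differ sublinearly: for every ε > 0 there exists M > 0 such that for all z ∈ ℝ^{2n} with |z| > M, if x, y : [0,1] → ℝ^{2n} satisfy ẋ(t) = −J₀∇H_t(x(t)), ẏ(t) = −J₀A_t y(t) and x(0) = y(0) = z, then |x(1) − y(1)| ≤ ε|z|. -/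

import Mathlib

open scoped RealInnerProductSpace

noncomputable section

/-- The standard symplectic matrix `J₀ = [[0, -Iₙ],[Iₙ, 0]]` on `ℝ^{2n} = ℝ^n ⊕ ℝ^n`. -/
def J0 (n : ℕ) : Matrix (Fin n ⊕ Fin n) (Fin n ⊕ Fin n) ℝ :=
  Matrix.fromBlocks 0 (-1) 1 0

/-- The action of a `2n × 2n` real matrix on euclidean space `ℝ^{2n}`. -/
def mv {n : ℕ} (A : Matrix (Fin n ⊕ Fin n) (Fin n ⊕ Fin n) ℝ)
    (z : EuclideanSpace ℝ (Fin n ⊕ Fin n)) : EuclideanSpace ℝ (Fin n ⊕ Fin n) :=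
  Matrix.toEuclideanLin A z

section Aux

open Real Set

lemma aux_exp_sub_one_le (x : ℝ) : Real.exp x - 1 ≤ x * Real.exp x := by
  have h := Real.add_one_le_exp (-x)
  have h2 : Real.exp x * (1 - x) ≤ Real.exp x * Real.exp (-x) := by
    apply mul_le_mul_of_nonneg_left _ (Real.exp_pos x).le
    linarith
  rw [← Real.exp_add] at h2
  simp at h2
  nlinarith

lemma aux_gronwallBound_le (δ K c d : ℝ) (hK : 0 ≤ K) (hc : 0 ≤ c) (hd : 0 ≤ d) :
    gronwallBound δ K c d ≤ (δ + c * d) * Real.exp (K * d) := by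
  rcases eq_or_ne K 0 with h | h
  · subst h
    simp only [gronwallBound_K0, zero_mul, Real.exp_zero, mul_one]
    exact le_refl _
  · rw [gronwallBound_of_K_ne_0 h]
    have h1 : Real.exp (K * d) - 1 ≤ (K * d) * Real.exp (K * d) :=
      aux_exp_sub_one_le _
    have hK' : 0 < K := lt_of_le_of_ne hK (Ne.symm h)
    have : c / K * (Real.exp (K * d) - 1) ≤ c * d * Real.exp (K * d) := by
      rw [div_mul_eq_mul_div, div_le_iff₀ hK']
      calc c * (Real.exp (K * d) - 1) ≤ c * ((K * d) * Real.exp (K * d)) :=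
            mul_le_mul_of_nonneg_left h1 hc
        _ = c * d * Real.exp (K * d) * K := by ring
    nlinarith [Real.exp_pos (K * d)]

variable {n : ℕ}

/-- shorthand for the euclidean space -/
abbrev E2 (n : ℕ) := EuclideanSpace ℝ (Fin n ⊕ Fin n)

/-- matrix action as a continuous linear map -/
def mCLM (M : Matrix (Fin n ⊕ Fin n) (Fin n ⊕ Fin n) ℝ) : E2 n →L[ℝ] E2 n :=
  LinearMap.toContinuousLinearMap (Matrix.toEuclideanLin M)

lemma mv_eq_mCLM (M : Matrix (Fin n ⊕ Fin n) (Fin n ⊕ Fin n) ℝ) (z : E2 n) :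
    mv M z = mCLM M z := rfl

lemma mCLM_continuous : Continuous (mCLM (n := n)) :=
  LinearMap.continuous_of_finiteDimensional
    ((LinearMap.toContinuousLinearMap :
        (E2 n →ₗ[ℝ] E2 n) ≃ₗ[ℝ] (E2 n →L[ℝ] E2 n)).toLinearMap.comp
      (Matrix.toEuclideanLin :
        Matrix (Fin n ⊕ Fin n) (Fin n ⊕ Fin n) ℝ ≃ₗ[ℝ] _).toLinearMap)

lemma aux_grad_eq (H : ℝ → E2 n → ℝ)
    (hH : ContDiff ℝ (⊤ : ℕ∞) fun p : ℝ × E2 n => H p.1 p.2) (t : ℝ) (z : E2 n) :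
    gradient (H t) z = (InnerProductSpace.toDual ℝ (E2 n)).symm
      ((fderiv ℝ (fun p : ℝ × E2 n => H p.1 p.2) (t, z)).comp
        (ContinuousLinearMap.inr ℝ ℝ (E2 n))) := by
  have h1 : HasFDerivAt (fun p : ℝ × E2 n => H p.1 p.2)
      (fderiv ℝ (fun p : ℝ × E2 n => H p.1 p.2) (t, z)) (t, z) :=
    (hH.differentiable (by simp) (t, z)).hasFDerivAt
  have h2 : HasFDerivAt (H t)
      ((fderiv ℝ (fun p : ℝ × E2 n => H p.1 p.2) (t, z)).comp
        (ContinuousLinearMap.inr ℝ ℝ (E2 n))) z :=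
    h1.comp z (hasFDerivAt_prodMk_right t z)
  rw [gradient, h2.fderiv]

lemma aux_grad_continuous (H : ℝ → E2 n → ℝ)
    (hH : ContDiff ℝ (⊤ : ℕ∞) fun p : ℝ × E2 n => H p.1 p.2) :
    Continuous fun p : ℝ × E2 n => gradient (H p.1) p.2 := by
  have heq : (fun p : ℝ × E2 n => gradient (H p.1) p.2) =
      fun p : ℝ × E2 n => (InnerProductSpace.toDual ℝ (E2 n)).symm
        ((fderiv ℝ (fun p : ℝ × E2 n => H p.1 p.2) p).comp
          (ContinuousLinearMap.inr ℝ ℝ (E2 n))) := by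
    funext p; exact aux_grad_eq H hH p.1 p.2
  rw [heq]
  exact (InnerProductSpace.toDual ℝ (E2 n)).symm.continuous.comp
    ((hH.continuous_fderiv (by simp)).clm_comp continuous_const)

lemma aux_hasDerivIci {f : ℝ → E2 n} {f' : ℝ → E2 n}
    (hf : ∀ t ∈ Icc (0:ℝ) 1, HasDerivWithinAt f (f' t) (Icc (0:ℝ) 1) t)
    {t : ℝ} (ht : t ∈ Ico (0:ℝ) 1) : HasDerivWithinAt f (f' t) (Ici t) t := by
  apply (hf t (Ico_subset_Icc_self ht)).mono_of_mem_nhdsWithin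
  have hsub : Ici t ∩ Iio 1 ⊆ Icc (0:ℝ) 1 := fun s hs => ⟨ht.1.trans hs.1, le_of_lt hs.2⟩
  exact Filter.mem_of_superset (inter_mem_nhdsWithin _ (Iio_mem_nhds ht.2)) hsub

end Aux

/-- If `H` is a smooth Hamiltonian, asymptotic to the quadratic form
determined by the smooth path of symmetric matrices `A` in the sense that
`sup_t |∇H_t(z) − A_t z| = o(|z|)` as `|z| → ∞`, and all solutions of `ẋ = −J₀∇H_t(x)`
exist on `[0,1]`, then the time-1 maps of `H` and of its quadratic part differ sublinearly:
for every `ε > 0` there is `M > 0` such that for all initial conditions `z` with `|z| > M`,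
any solutions `x` of `ẋ = −J₀∇H_t(x)` and `y` of `ẏ = −J₀A_t y` on `[0,1]` starting at `z`
satisfy `|x(1) − y(1)| ≤ ε|z|`. -/
theorem stmt_0 (n : ℕ)
    (H : ℝ → EuclideanSpace ℝ (Fin n ⊕ Fin n) → ℝ)
    (A : ℝ → Matrix (Fin n ⊕ Fin n) (Fin n ⊕ Fin n) ℝ)
    (hH : ContDiff ℝ (⊤ : ℕ∞) fun p : ℝ × EuclideanSpace ℝ (Fin n ⊕ Fin n) => H p.1 p.2)
    (hHper : ∀ t z, H (t + 1) z = H t z)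
    (hA : ∀ i j, ContDiff ℝ (⊤ : ℕ∞) fun t => A t i j)
    (hAper : ∀ t, A (t + 1) = A t)
    (hAsymm : ∀ t, (A t).IsSymm)
    (hsub : ∀ ε > (0 : ℝ), ∃ M > (0 : ℝ), ∀ z : EuclideanSpace ℝ (Fin n ⊕ Fin n),
      M < ‖z‖ → ∀ t : ℝ, ‖gradient (H t) z - mv (A t) z‖ ≤ ε * ‖z‖)
    (hexist : ∀ z : EuclideanSpace ℝ (Fin n ⊕ Fin n),
      ∃ x : ℝ → EuclideanSpace ℝ (Fin n ⊕ Fin n), x 0 = z ∧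
        ∀ t ∈ Set.Icc (0 : ℝ) 1, HasDerivWithinAt x
          (-mv (J0 n) (gradient (H t) (x t))) (Set.Icc (0 : ℝ) 1) t) :
    ∀ ε > (0 : ℝ), ∃ M > (0 : ℝ), ∀ z : EuclideanSpace ℝ (Fin n ⊕ Fin n), M < ‖z‖ →
      ∀ x y : ℝ → EuclideanSpace ℝ (Fin n ⊕ Fin n),
        x 0 = z → y 0 = z →
        (∀ t ∈ Set.Icc (0 : ℝ) 1, HasDerivWithinAt x
          (-mv (J0 n) (gradient (H t) (x t))) (Set.Icc (0 : ℝ) 1) t) →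
        (∀ t ∈ Set.Icc (0 : ℝ) 1, HasDerivWithinAt y
          (-mv (J0 n) (mv (A t) (y t))) (Set.Icc (0 : ℝ) 1) t) →
        ‖x 1 - y 1‖ ≤ ε * ‖z‖ := by

  classical
  have hgc : Continuous fun p : ℝ × E2 n => gradient (H p.1) p.2 := aux_grad_continuous H hH
  have hΦcont : Continuous fun t => mCLM (A t) :=
    mCLM_continuous.comp (continuous_pi fun i => continuous_pi fun j => (hA i j).continuous)
  obtain ⟨t0, ht0, hLt⟩ := isCompact_Icc.exists_isMaxOn (Set.nonempty_Icc.2 zero_le_one)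
    ((continuous_norm.comp hΦcont).continuousOn :
      ContinuousOn (fun t => ‖mCLM (A t)‖) (Set.Icc (0:ℝ) 1))
  obtain ⟨Jc, hJcdef⟩ : ∃ v : E2 n →L[ℝ] E2 n, v = mCLM (J0 n) := ⟨_, rfl⟩
  obtain ⟨KJ, hKJdef⟩ : ∃ v : ℝ, v = ‖Jc‖ := ⟨_, rfl⟩
  have hKJ : 0 ≤ KJ := hKJdef ▸ norm_nonneg _
  obtain ⟨L, hLdef⟩ : ∃ v : ℝ, v = ‖mCLM (A t0)‖ := ⟨_, rfl⟩
  have hL0 : 0 ≤ L := hLdef ▸ norm_nonneg _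
  have hLb : ∀ t ∈ Set.Icc (0:ℝ) 1, ∀ w : E2 n, ‖mCLM (A t) w‖ ≤ L * ‖w‖ := by
    intro t ht w
    rw [hLdef]
    exact ((mCLM (A t)).le_opNorm w).trans
      (mul_le_mul_of_nonneg_right (hLt ht) (norm_nonneg w))
  have hJb : ∀ w : E2 n, ‖Jc w‖ ≤ KJ * ‖w‖ := by
    intro w; rw [hKJdef]; exact Jc.le_opNorm w
  intro ε hε
  obtain ⟨E0, hE0def⟩ : ∃ v : ℝ, v = Real.exp (KJ * (L + 1)) * Real.exp (KJ * L) := ⟨_, rfl⟩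
  have hE0pos : 0 < E0 := hE0def ▸ mul_pos (Real.exp_pos _) (Real.exp_pos _)
  obtain ⟨ε', hε'def⟩ : ∃ v : ℝ, v = min 1 (ε / (2 * (KJ + 1) * E0)) := ⟨_, rfl⟩
  have hden : 0 < 2 * (KJ + 1) * E0 := mul_pos (mul_pos two_pos (by linarith)) hE0pos
  have hε'pos : 0 < ε' := hε'def ▸ lt_min one_pos (div_pos hε hden)
  have hε'1 : ε' ≤ 1 := hε'def ▸ min_le_left _ _
  have hε'2 : ε' ≤ ε / (2 * (KJ + 1) * E0) := hε'def ▸ min_le_right _ _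
  obtain ⟨M', hM'pos, hM'⟩ := hsub ε' hε'pos
  -- uniform bound C on the compact region
  have hKcpt : IsCompact (Set.Icc (0:ℝ) 1 ×ˢ Metric.closedBall (0 : E2 n) M') :=
    isCompact_Icc.prod (isCompact_closedBall _ _)
  have hcont2 : ContinuousOn (fun p : ℝ × E2 n => ‖gradient (H p.1) p.2 - mCLM (A p.1) p.2‖)
      (Set.Icc (0:ℝ) 1 ×ˢ Metric.closedBall (0 : E2 n) M') := by
    apply Continuous.continuousOn
    apply Continuous.norm
    exact hgc.sub (isBoundedBilinearMap_apply.continuous.comp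
      ((hΦcont.comp continuous_fst).prodMk continuous_snd))
  obtain ⟨p0, hp0K, hp0⟩ := hKcpt.exists_isMaxOn
    ⟨(0, 0), ⟨Set.left_mem_Icc.2 zero_le_one, Metric.mem_closedBall_self hM'pos.le⟩⟩ hcont2
  obtain ⟨C, hCdef⟩ : ∃ v : ℝ, v = ‖gradient (H p0.1) p0.2 - mCLM (A p0.1) p0.2‖ := ⟨_, rfl⟩
  have hC0 : 0 ≤ C := hCdef ▸ norm_nonneg _
  -- key pointwise bound valid for all w
  have hkey : ∀ t ∈ Set.Icc (0:ℝ) 1, ∀ w : E2 n,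
      ‖gradient (H t) w - mCLM (A t) w‖ ≤ ε' * ‖w‖ + C := by
    intro t ht w
    rcases le_or_gt ‖w‖ M' with h | h
    · have h1 : ‖gradient (H t) w - mCLM (A t) w‖ ≤ C := by
        rw [hCdef]
        exact hp0 (a := (t, w)) ⟨ht, by simpa [Metric.mem_closedBall, dist_zero_right] using h⟩
      have h2 : 0 ≤ ε' * ‖w‖ := mul_nonneg hε'pos.le (norm_nonneg _)
      linarith
    · have h1 := hM' w h t
      rw [mv_eq_mCLM] at h1
      linarith
  -- constants
  obtain ⟨K1, hK1def⟩ : ∃ v : ℝ, v = KJ * (L + ε') := ⟨_, rfl⟩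
  have hK10 : 0 ≤ K1 := hK1def ▸ mul_nonneg hKJ (add_nonneg hL0 hε'pos.le)
  obtain ⟨c1, hc1def⟩ : ∃ v : ℝ, v = KJ * C := ⟨_, rfl⟩
  have hc10 : 0 ≤ c1 := hc1def ▸ mul_nonneg hKJ hC0
  obtain ⟨K2, hK2def⟩ : ∃ v : ℝ, v = KJ * L := ⟨_, rfl⟩
  have hK20 : 0 ≤ K2 := hK2def ▸ mul_nonneg hKJ hL0
  obtain ⟨Ccst, hCcstdef⟩ : ∃ v : ℝ,
      v = (KJ * ε' * (KJ * C) * Real.exp (KJ * (L + 1)) + KJ * C) * Real.exp K2 := ⟨_, rfl⟩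
  have hCcst0 : 0 ≤ Ccst := hCcstdef ▸
    mul_nonneg (add_nonneg (mul_nonneg (mul_nonneg (mul_nonneg hKJ hε'pos.le)
      (mul_nonneg hKJ hC0)) (Real.exp_pos _).le) (mul_nonneg hKJ hC0)) (Real.exp_pos _).le
  refine ⟨max M' (2 * Ccst / ε), lt_of_lt_of_le hM'pos (le_max_left _ _), ?_⟩
  intro z hz x y hx0 hy0 hx hy
  have hzM' : M' < ‖z‖ := lt_of_le_of_lt (le_max_left _ _) hz
  have hz0 : (0:ℝ) ≤ ‖z‖ := norm_nonneg z
  have hzC : Ccst ≤ ε / 2 * ‖z‖ := by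
    have h1 : 2 * Ccst / ε < ‖z‖ := lt_of_le_of_lt (le_max_right _ _) hz
    rw [div_lt_iff₀ hε] at h1
    nlinarith
  -- Step 1 : a priori bound on x
  have hxcont : ContinuousOn x (Set.Icc (0:ℝ) 1) := fun t ht => (hx t ht).continuousWithinAt
  have hxg : ∀ t ∈ Set.Icc (0:ℝ) 1, ‖x t‖ ≤ gronwallBound ‖z‖ K1 c1 (t - 0) := by
    apply norm_le_gronwallBound_of_norm_deriv_right_le hxcont
      (fun t ht => aux_hasDerivIci hx ht)
    · exact le_of_eq (by rw [hx0])
    · intro t ht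
      have ht' := Set.Ico_subset_Icc_self ht
      rw [norm_neg, mv_eq_mCLM, ← hJcdef]
      have hsplit : gradient (H t) (x t) =
          (gradient (H t) (x t) - mCLM (A t) (x t)) + mCLM (A t) (x t) := by abel
      calc ‖Jc (gradient (H t) (x t))‖ ≤ KJ * ‖gradient (H t) (x t)‖ := hJb _
        _ ≤ KJ * ((ε' * ‖x t‖ + C) + L * ‖x t‖) := by
            apply mul_le_mul_of_nonneg_left _ hKJ
            rw [hsplit]
            exact (norm_add_le _ _).trans (add_le_add (hkey t ht' _) (hLb t ht' _))
        _ = K1 * ‖x t‖ + c1 := by rw [hK1def, hc1def]; ring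
  obtain ⟨X, hXdef⟩ : ∃ v : ℝ, v = (‖z‖ + c1) * Real.exp K1 := ⟨_, rfl⟩
  have hXb : ∀ t ∈ Set.Icc (0:ℝ) 1, ‖x t‖ ≤ X := by
    intro t ht
    refine ((hxg t ht).trans ?_)
    rw [sub_zero, hXdef]
    refine (aux_gronwallBound_le _ _ _ _ hK10 hc10 ht.1).trans ?_
    have h1 : ‖z‖ + c1 * t ≤ ‖z‖ + c1 :=
      by have := mul_le_of_le_one_right hc10 ht.2; linarith
    have h2 : Real.exp (K1 * t) ≤ Real.exp K1 :=
      Real.exp_le_exp.2 (mul_le_of_le_one_right hK10 ht.2)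
    have h3 : (0:ℝ) ≤ ‖z‖ + c1 * t := add_nonneg hz0 (mul_nonneg hc10 ht.1)
    exact mul_le_mul h1 h2 (Real.exp_pos _).le (by linarith)
  have hX0 : 0 ≤ X := le_trans (norm_nonneg (x 0)) (hXb 0 (Set.left_mem_Icc.2 zero_le_one))
  -- Step 2 : Gronwall for the difference
  obtain ⟨c2, hc2def⟩ : ∃ v : ℝ, v = KJ * (ε' * X + C) := ⟨_, rfl⟩
  have hc20 : 0 ≤ c2 := hc2def ▸
    mul_nonneg hKJ (add_nonneg (mul_nonneg hε'pos.le hX0) hC0)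
  have hub : ∀ t ∈ Set.Icc (0:ℝ) 1, ‖x t - y t‖ ≤ gronwallBound 0 K2 c2 (t - 0) := by
    apply norm_le_gronwallBound_of_norm_deriv_right_le
      (f := fun t => x t - y t)
      (f' := fun t => (-mv (J0 n) (gradient (H t) (x t))) - (-mv (J0 n) (mv (A t) (y t))))
      (fun t ht => ((hx t ht).sub (hy t ht)).continuousWithinAt)
      (fun t ht => aux_hasDerivIci (fun s hs => (hx s hs).sub (hy s hs)) ht)
    · rw [hx0, hy0, sub_self, norm_zero]
    · intro t ht
      have ht' := Set.Ico_subset_Icc_self ht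
      have heq : (-mv (J0 n) (gradient (H t) (x t))) - (-mv (J0 n) (mv (A t) (y t)))
          = -(Jc (gradient (H t) (x t) - mCLM (A t) (y t))) := by
        rw [hJcdef]
        simp only [mv_eq_mCLM, map_sub]
        abel
      rw [heq, norm_neg]
      have hsplit : gradient (H t) (x t) - mCLM (A t) (y t)
          = (gradient (H t) (x t) - mCLM (A t) (x t)) + mCLM (A t) (x t - y t) := by
        rw [map_sub]; abel
      calc ‖Jc (gradient (H t) (x t) - mCLM (A t) (y t))‖
          ≤ KJ * ‖gradient (H t) (x t) - mCLM (A t) (y t)‖ := hJb _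
        _ ≤ KJ * ((ε' * ‖x t‖ + C) + L * ‖x t - y t‖) := by
            apply mul_le_mul_of_nonneg_left _ hKJ
            rw [hsplit]
            exact (norm_add_le _ _).trans (add_le_add (hkey t ht' _) (hLb t ht' _))
        _ ≤ KJ * ((ε' * X + C) + L * ‖x t - y t‖) := by
            apply mul_le_mul_of_nonneg_left _ hKJ
            have := mul_le_mul_of_nonneg_left (hXb t ht') hε'pos.le
            linarith
        _ = K2 * ‖x t - y t‖ + c2 := by rw [hK2def, hc2def]; ring
  have hfin : ‖x 1 - y 1‖ ≤ c2 * Real.exp K2 := by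
    have h := hub 1 (Set.right_mem_Icc.2 zero_le_one)
    rw [sub_zero] at h
    refine h.trans ?_
    refine (aux_gronwallBound_le 0 K2 c2 1 hK20 hc20 zero_le_one).trans ?_
    rw [zero_add, mul_one, mul_one]
  refine hfin.trans ?_
  -- arithmetic conclusion
  have hexpK1 : Real.exp K1 ≤ Real.exp (KJ * (L + 1)) := by
    apply Real.exp_le_exp.2
    rw [hK1def]
    exact mul_le_mul_of_nonneg_left (by linarith) hKJ
  have ht2 : KJ * ε' * Real.exp K1 ≤ (KJ + 1) * ε' * Real.exp (KJ * (L + 1)) :=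
    mul_le_mul (mul_le_mul_of_nonneg_right (by linarith) hε'pos.le) hexpK1
      (Real.exp_pos _).le (mul_nonneg (by linarith) hε'pos.le)
  have hterm1 : KJ * ε' * Real.exp K1 * Real.exp K2 ≤ ε / 2 := by
    have h2 : KJ * ε' * Real.exp K1 * Real.exp K2 ≤ (KJ + 1) * ε' * E0 :=
      calc KJ * ε' * Real.exp K1 * Real.exp K2
          ≤ ((KJ + 1) * ε' * Real.exp (KJ * (L + 1))) * Real.exp K2 :=
            mul_le_mul_of_nonneg_right ht2 (Real.exp_pos _).le
        _ = (KJ + 1) * ε' * E0 := by rw [hE0def, hK2def]; ring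
    have h3 : (KJ + 1) * ε' * E0 ≤ (KJ + 1) * (ε / (2 * (KJ + 1) * E0)) * E0 :=
      mul_le_mul_of_nonneg_right
        (mul_le_mul_of_nonneg_left hε'2 (by linarith)) hE0pos.le
    have h4 : (KJ + 1) * (ε / (2 * (KJ + 1) * E0)) * E0 = ε / 2 := by
      field_simp
    linarith
  have hterm2 : (KJ * ε' * (KJ * C) * Real.exp K1 + KJ * C) * Real.exp K2 ≤ Ccst := by
    rw [hCcstdef]
    have h1 : KJ * ε' * (KJ * C) * Real.exp K1 ≤ KJ * ε' * (KJ * C) * Real.exp (KJ * (L + 1)) :=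
      mul_le_mul_of_nonneg_left hexpK1
        (mul_nonneg (mul_nonneg hKJ hε'pos.le) (mul_nonneg hKJ hC0))
    exact mul_le_mul_of_nonneg_right (by linarith) (Real.exp_pos _).le
  have hsplitf : c2 * Real.exp K2 =
      (KJ * ε' * Real.exp K1 * Real.exp K2) * ‖z‖ +
      (KJ * ε' * (KJ * C) * Real.exp K1 + KJ * C) * Real.exp K2 := by
    rw [hc2def, hXdef, hc1def]; ring
  rw [hsplitf]
  have hA1 : (KJ * ε' * Real.exp K1 * Real.exp K2) * ‖z‖ ≤ ε / 2 * ‖z‖ :=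
    mul_le_mul_of_nonneg_right hterm1 hz0
  linarith
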